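/- Let K be a field, let V = ⊕_{i=1}^∞ K be the K-vector space of finitely supported sequences, and let R = End_K(V) be its ring of K-linear endomorphisms. Let f ∈ R be the right-shift map (a₁, a₂, …) ↦ (0, a₁, a₂, …) and let π₁ ∈ R be the projection (a₁, a₂, …) ↦ (a₁, 0, 0, …). Then (Rπ₁)(fR) = 0, so both Rπ₁ and fR are vertices of the directed graph Γ(IPO(R)); however, (fR)·A ≠ 0 for every nonzero A ∈ IPO(R) (because f has a left inverse in R), so the vertex fR has no outgoing edge and hence Γ(IPO(R)) is not connected. -/

import Mathlib

open scoped Pointwise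

/-- `I` is a left ideal of the ring `R`: an additive subgroup with `R·I ⊆ I`. -/
def IsLeftIdeal (R : Type*) [Ring R] (I : AddSubgroup R) : Prop :=
  ∀ r : R, ∀ x ∈ I, r * x ∈ I

/-- `I` is a right ideal of the ring `R`: an additive subgroup with `I·R ⊆ I`. -/
def IsRightIdeal (R : Type*) [Ring R] (I : AddSubgroup R) : Prop :=
  ∀ r : R, ∀ x ∈ I, x * r ∈ I

/-- `I` is a one-sided (left or right) ideal of `R`. -/
def IsOneSidedIdeal (R : Type*) [Ring R] (I : AddSubgroup R) : Prop :=
  IsLeftIdeal R I ∨ IsRightIdeal R I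

/-- `IPO(R)`: the set of all products `I*J` of two one-sided ideals of `R`.
Here `I * J` is the additive subgroup generated by `{a*b : a ∈ I, b ∈ J}`
(the pointwise product of additive subgroups). -/
def IPO (R : Type*) [Ring R] : Set (AddSubgroup R) :=
  {A | ∃ I J : AddSubgroup R, IsOneSidedIdeal R I ∧ IsOneSidedIdeal R J ∧ A = I * J}

/-- `A` is a vertex of `APOG(R) = Γ(IPO(R))`: a nonzero element of `IPO(R)` that is a
one-sided zero-divisor of the semigroup `IPO(R)`. -/
def APOGVertex (R : Type*) [Ring R] (A : AddSubgroup R) : Prop :=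
  A ∈ IPO R ∧ A ≠ ⊥ ∧ ∃ B ∈ IPO R, B ≠ ⊥ ∧ (A * B = ⊥ ∨ B * A = ⊥)

/-- The directed edge `A → B` of `APOG(R)`: both are vertices, `A ≠ B` and `A*B = 0`. -/
def APOGEdge (R : Type*) [Ring R] (A B : AddSubgroup R) : Prop :=
  APOGVertex R A ∧ APOGVertex R B ∧ A ≠ B ∧ A * B = ⊥

/-- The principal left ideal `Rx`. -/
def leftPrincipal {R : Type*} [Ring R] (x : R) : AddSubgroup R where
  carrier := Set.range fun r => r * x
  zero_mem' := ⟨0, zero_mul x⟩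
  add_mem' := by rintro a b ⟨r, rfl⟩ ⟨s, rfl⟩; exact ⟨r + s, by simp [add_mul]⟩
  neg_mem' := by rintro a ⟨r, rfl⟩; exact ⟨-r, by simp⟩

/-- The principal right ideal `xR`. -/
def rightPrincipal {R : Type*} [Ring R] (x : R) : AddSubgroup R where
  carrier := Set.range fun r => x * r
  zero_mem' := ⟨0, mul_zero x⟩
  add_mem' := by rintro a b ⟨r, rfl⟩ ⟨s, rfl⟩; exact ⟨r + s, by simp [mul_add]⟩
  neg_mem' := by rintro a ⟨r, rfl⟩; exact ⟨-r, by simp⟩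

/-- The right shift `(a₁, a₂, …) ↦ (0, a₁, a₂, …)` on `V = ⊕ℕ K`, as a `K`-linear
endomorphism. -/
noncomputable def rightShift (K : Type*) [Field K] : Module.End K (ℕ →₀ K) :=
  Finsupp.lmapDomain K K Nat.succ

/-- The projection `(a₁, a₂, …) ↦ (a₁, 0, 0, …)` on `V = ⊕ℕ K`, as a `K`-linear
endomorphism. -/
noncomputable def projFirst (K : Type*) [Field K] : Module.End K (ℕ →₀ K) :=
  (Finsupp.lsingle 0).comp (Finsupp.lapply 0)

noncomputable instance instMulAddSubgroupEnd (K : Type*) [Field K] :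
    Mul (AddSubgroup (Module.End K (ℕ →₀ K))) :=
  AddSubgroup.mul (R := Module.End K (ℕ →₀ K))

/-!
Since `π₁ f = 0`, `(Rπ₁)(fR) = 0`, so both principal one-sided ideals are vertices. The left
shift `g` satisfies `g f = 1`, so `f a = 0` forces `a = 0`; hence `fR · A ≠ 0` whenever `A ≠ 0`,
and `fR` has no outgoing edge. No path starts at `fR`, in particular none reaches `Rπ₁`.
-/

namespace AddSubgroup

variable {R : Type*} [Ring R]

theorem mul_mem_mul {M N : AddSubgroup R} {m n : R} (hm : m ∈ M) (hn : n ∈ N) :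
    m * n ∈ M * N :=
  AddSubmonoid.mul_mem_mul hm hn

theorem mul_le {M N P : AddSubgroup R} : M * N ≤ P ↔ ∀ m ∈ M, ∀ n ∈ N, m * n ∈ P :=
  AddSubmonoid.mul_le

end AddSubgroup

section OneSidedIdeals

variable {R : Type*} [Ring R]

theorem isOneSidedIdeal_top : IsOneSidedIdeal R ⊤ :=
  Or.inl fun _ _ _ => trivial

theorem isLeftIdeal_leftPrincipal (x : R) : IsLeftIdeal R (leftPrincipal x) := by
  rintro r _ ⟨s, rfl⟩
  exact ⟨r * s, mul_assoc r s x⟩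

theorem isRightIdeal_rightPrincipal (x : R) : IsRightIdeal R (rightPrincipal x) := by
  rintro r _ ⟨s, rfl⟩
  exact ⟨s * r, (mul_assoc x s r).symm⟩

theorem top_mul_of_isLeftIdeal {I : AddSubgroup R} (hI : IsLeftIdeal R I) : ⊤ * I = I := by
  refine le_antisymm (AddSubgroup.mul_le.2 fun m _ n hn => hI m n hn) fun x hx => ?_
  simpa using AddSubgroup.mul_mem_mul (AddSubgroup.mem_top 1) hx

theorem mul_top_of_isRightIdeal {I : AddSubgroup R} (hI : IsRightIdeal R I) : I * ⊤ = I := by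
  refine le_antisymm (AddSubgroup.mul_le.2 fun m hm n _ => hI n m hm) fun x hx => ?_
  simpa using AddSubgroup.mul_mem_mul hx (AddSubgroup.mem_top 1)

theorem leftPrincipal_mem_IPO (x : R) : leftPrincipal x ∈ IPO R :=
  ⟨⊤, leftPrincipal x, isOneSidedIdeal_top, Or.inl (isLeftIdeal_leftPrincipal x),
    (top_mul_of_isLeftIdeal (isLeftIdeal_leftPrincipal x)).symm⟩

theorem rightPrincipal_mem_IPO (x : R) : rightPrincipal x ∈ IPO R :=
  ⟨rightPrincipal x, ⊤, Or.inr (isRightIdeal_rightPrincipal x), isOneSidedIdeal_top,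
    (mul_top_of_isRightIdeal (isRightIdeal_rightPrincipal x)).symm⟩

theorem mem_leftPrincipal_self (x : R) : x ∈ leftPrincipal x := ⟨1, one_mul x⟩

theorem mem_rightPrincipal_self (x : R) : x ∈ rightPrincipal x := ⟨1, mul_one x⟩

theorem leftPrincipal_ne_bot {x : R} (hx : x ≠ 0) : leftPrincipal x ≠ ⊥ := fun h =>
  hx <| AddSubgroup.mem_bot.1 (h ▸ mem_leftPrincipal_self x)

theorem rightPrincipal_ne_bot {x : R} (hx : x ≠ 0) : rightPrincipal x ≠ ⊥ := fun h =>
  hx <| AddSubgroup.mem_bot.1 (h ▸ mem_rightPrincipal_self x)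

theorem leftPrincipal_mul_rightPrincipal_eq_bot {a b : R} (hab : a * b = 0) :
    leftPrincipal a * rightPrincipal b = ⊥ := by
  refine eq_bot_iff.2 (AddSubgroup.mul_le.2 ?_)
  rintro _ ⟨r, rfl⟩ _ ⟨s, rfl⟩
  rw [AddSubgroup.mem_bot, mul_assoc, ← mul_assoc a, hab, zero_mul, mul_zero]

theorem rightPrincipal_mul_ne_bot_of_mul_eq_one {f g : R} (hgf : g * f = 1)
    {A : AddSubgroup R} (hA : A ≠ ⊥) : rightPrincipal f * A ≠ ⊥ := by
  intro h
  refine hA ((AddSubgroup.eq_bot_iff_forall A).2 fun a ha => ?_)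
  have hfa : f * a = 0 :=
    AddSubgroup.mem_bot.1 (h ▸ AddSubgroup.mul_mem_mul (mem_rightPrincipal_self f) ha)
  calc a = g * f * a := by rw [hgf, one_mul]
    _ = 0 := by rw [mul_assoc, hfa, mul_zero]

end OneSidedIdeals

section ZeroDivisorGraph

variable {R : Type*} [Ring R]

theorem apogVertex_of_mul_eq_bot {A B : AddSubgroup R} (hA : A ∈ IPO R) (hB : B ∈ IPO R)
    (hA0 : A ≠ ⊥) (hB0 : B ≠ ⊥) (hAB : A * B = ⊥) : APOGVertex R A ∧ APOGVertex R B :=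
  ⟨⟨hA, hA0, B, hB, hB0, Or.inl hAB⟩, ⟨hB, hB0, A, hA, hA0, Or.inr hAB⟩⟩

theorem not_apogEdge_of_forall_mul_ne_bot {A : AddSubgroup R}
    (hA : ∀ B ∈ IPO R, B ≠ ⊥ → A * B ≠ ⊥) (B : AddSubgroup R) : ¬ APOGEdge R A B := by
  rintro ⟨-, ⟨hB, hB0, -⟩, -, hAB⟩
  exact hA B hB hB0 hAB

theorem not_transGen_apogEdge_of_forall_not_apogEdge {A B : AddSubgroup R}
    (hA : ∀ C, ¬ APOGEdge R A C) : ¬ Relation.TransGen (APOGEdge R) A B := by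
  rw [Relation.TransGen.head'_iff]
  rintro ⟨C, hAC, -⟩
  exact hA C hAC

end ZeroDivisorGraph

section Shift

variable (K : Type*) [Field K]

noncomputable def leftShift : Module.End K (ℕ →₀ K) :=
  Finsupp.lmapDomain K K Nat.pred

theorem leftShift_mul_rightShift : leftShift K * rightShift K = 1 := by
  refine LinearMap.ext fun v => ?_
  simp only [Module.End.mul_apply, leftShift, rightShift, Finsupp.lmapDomain_apply,
    Module.End.one_apply, ← Finsupp.mapDomain_comp]
  exact Finsupp.mapDomain_id

theorem projFirst_mul_rightShift : projFirst K * rightShift K = 0 := by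
  refine LinearMap.ext fun v => ?_
  simp only [Module.End.mul_apply, projFirst, rightShift, LinearMap.comp_apply,
    Finsupp.lsingle_apply, Finsupp.lapply_apply, Finsupp.lmapDomain_apply, LinearMap.zero_apply]
  rw [Finsupp.mapDomain_of_notMem_range _ _ fun ⟨n, hn⟩ => Nat.succ_ne_zero n hn,
    Finsupp.single_zero]

theorem rightShift_ne_zero : rightShift K ≠ 0 :=
  right_ne_zero_of_mul_eq_one (leftShift_mul_rightShift K)

theorem projFirst_ne_zero : projFirst K ≠ 0 := by
  intro h
  have := congrArg (fun g => g (Finsupp.single 0 1) 0) h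
  simp [projFirst] at this

end Shift

/-- Let `K` be a field, `V = ⊕ℕ K` (finitely supported sequences) and
`R = End_K(V)`.  With `f` the right shift and `π₁` the projection onto the first
coordinate, `(Rπ₁)(fR) = 0`, both `Rπ₁` and `fR` are vertices of `Γ(IPO(R))`, yet
`(fR)·A ≠ 0` for every nonzero `A ∈ IPO(R)` (because `f` has a left inverse in `R`), so
the vertex `fR` has no outgoing edge and `Γ(IPO(R))` is not connected. -/
theorem shift_example_not_connected (K : Type*) [Field K] :
    leftPrincipal (projFirst K) * rightPrincipal (rightShift K) = ⊥ ∧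
    APOGVertex (Module.End K (ℕ →₀ K)) (leftPrincipal (projFirst K)) ∧
    APOGVertex (Module.End K (ℕ →₀ K)) (rightPrincipal (rightShift K)) ∧
    (∃ g : Module.End K (ℕ →₀ K), g * rightShift K = 1) ∧
    (∀ A ∈ IPO (Module.End K (ℕ →₀ K)), A ≠ ⊥ →
      rightPrincipal (rightShift K) * A ≠ ⊥) ∧
    (∀ B : AddSubgroup (Module.End K (ℕ →₀ K)),
      ¬ APOGEdge (Module.End K (ℕ →₀ K)) (rightPrincipal (rightShift K)) B) ∧
    ¬ (∀ A B : AddSubgroup (Module.End K (ℕ →₀ K)),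
        APOGVertex (Module.End K (ℕ →₀ K)) A → APOGVertex (Module.End K (ℕ →₀ K)) B →
        A ≠ B → Relation.TransGen (APOGEdge (Module.End K (ℕ →₀ K))) A B) := by
  have hPF : leftPrincipal (projFirst K) * rightPrincipal (rightShift K) = ⊥ :=
    leftPrincipal_mul_rightPrincipal_eq_bot (projFirst_mul_rightShift K)
  have hF0 : rightPrincipal (rightShift K) ≠ ⊥ := rightPrincipal_ne_bot (rightShift_ne_zero K)
  obtain ⟨hPV, hFV⟩ := apogVertex_of_mul_eq_bot (leftPrincipal_mem_IPO _)
    (rightPrincipal_mem_IPO _) (leftPrincipal_ne_bot (projFirst_ne_zero K)) hF0 hPF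
  have hFmul : ∀ A ∈ IPO (Module.End K (ℕ →₀ K)), A ≠ ⊥ →
      rightPrincipal (rightShift K) * A ≠ ⊥ := fun A _ hA =>
    rightPrincipal_mul_ne_bot_of_mul_eq_one (leftShift_mul_rightShift K) hA
  have hNoEdge := not_apogEdge_of_forall_mul_ne_bot hFmul
  refine ⟨hPF, hPV, hFV, ⟨leftShift K, leftShift_mul_rightShift K⟩, hFmul, hNoEdge,
    fun hConnected => ?_⟩
  have hne : rightPrincipal (rightShift K) ≠ leftPrincipal (projFirst K) := fun h =>
    hFmul _ (rightPrincipal_mem_IPO _) hF0 (by rwa [← h] at hPF)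
  exact not_transGen_apogEdge_of_forall_not_apogEdge hNoEdge (hConnected _ _ hFV hPV hne)
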